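/- Fpc-generating scheme with dummy parameters: let n ≥ 0 and Q = λy p1 … pn x. x (y p1 … pn x). If Y is a fixed point combinator, then for arbitrary terms P1, …, Pn the term Y Q P1 … Pn is a fixed point combinator. -/
import Mathlib


/-- Untyped λ-terms in de Bruijn notation. -/
inductive Lam : Type
  | var : Nat → Lam
  | app : Lam → Lam → Lam
  | lam : Lam → Lam
  deriving DecidableEq

namespace Lam

/-- Lift (shift) free variables ≥ `d` by one. -/
def lift (d : Nat) : Lam → Lam
  | var n => if n < d then var n else var (n + 1)
  | app s t => app (lift d s) (lift d t)
  | lam t => lam (lift (d + 1) t)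

/-- Capture-avoiding substitution of `u` for the variable with index `k`. -/
def subst (k : Nat) (u : Lam) : Lam → Lam
  | var n => if n = k then u else if k < n then var (n - 1) else var n
  | app s t => app (subst k u s) (subst k u t)
  | lam t => lam (subst (k + 1) (lift 0 u) t)

/-- One-step β-reduction `→β` (compatible closure of the β-rule). -/
inductive Step : Lam → Lam → Prop
  | beta (t u : Lam) : Step (app (lam t) u) (subst 0 u t)
  | appL {s s' : Lam} (t : Lam) : Step s s' → Step (app s t) (app s' t)
  | appR (s : Lam) {t t' : Lam} : Step t t' → Step (app s t) (app s t')
  | lam {t t' : Lam} : Step t t' → Step (lam t) (lam t')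

/-- Many-step β-reduction `↠β`. -/
def Red : Lam → Lam → Prop := Relation.ReflTransGen Step

/-- β-convertibility `=β`. -/
def Conv : Lam → Lam → Prop := Relation.EqvGen Step

/-- `Y` is a fixed point combinator: `Y x =β x (Y x)` for a fresh variable `x`. -/
def isFPC (Y : Lam) : Prop :=
  Conv (app (lift 0 Y) (var 0)) (app (var 0) (app (lift 0 Y) (var 0)))

/-- `M P^n`: `M` applied to `n` copies of `P`. -/
def appIter (M P : Lam) : Nat → Lam
  | 0 => M
  | n + 1 => appIter (app M P) P n

/-- `I = λx.x` -/
def K_I : Lam := lam (var 0)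

/-- `S = λxyz.xz(yz)` -/
def K_S : Lam := lam (lam (lam (app (app (var 2) (var 0)) (app (var 1) (var 0)))))

/-- `B = λxyz.x(yz)` -/
def K_B : Lam := lam (lam (lam (app (var 2) (app (var 1) (var 0)))))

/-- `δ = λab.b(ab)` -/
def K_delta : Lam := lam (lam (app (var 0) (app (var 1) (var 0))))

/-- `ω_f = λx.f(xx)` (with `f` the variable bound just outside). -/
def K_omega : Lam := lam (app (var 1) (app (var 0) (var 0)))

/-- Curry's fpc `Y0 = λf.ω_f ω_f`. -/
def Y0 : Lam := lam (app K_omega K_omega)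

/-- `η = λxf.f(xxf)` -/
def K_eta : Lam := lam (lam (app (var 0) (app (app (var 1) (var 1)) (var 0))))

/-- Turing's fpc `Y1 = ηη`. -/
def Y1 : Lam := app K_eta K_eta

/-- One head reduction step: contraction of the head redex. -/
inductive Head : Lam → Lam → Prop
  | beta (t u : Lam) : Head (app (lam t) u) (subst 0 u t)
  | app {s s' : Lam} (t : Lam) : (∀ u, s ≠ lam u) → Head s s' → Head (app s t) (app s' t)
  | lam {t t' : Lam} : Head t t' → Head (lam t) (lam t')

/-- Exactly `k` head reduction steps. -/
def HeadN : Nat → Lam → Lam → Prop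
  | 0, s, t => s = t
  | k + 1, s, t => ∃ u, Head s u ∧ HeadN k u t

/-- Exactly `k` β-reduction steps. -/
def StepN : Nat → Lam → Lam → Prop
  | 0, s, t => s = t
  | k + 1, s, t => ∃ u, Step s u ∧ StepN k u t

/-- `n`-fold λ-abstraction. -/
def lamN : Nat → Lam → Lam
  | 0, t => t
  | n + 1, t => lam (lamN n t)

/-- `M (var (n-1)) (var (n-2)) ⋯ (var 0)`. -/
def appVars (M : Lam) (n : Nat) : Lam :=
  ((List.range n).reverse).foldl (fun acc i => app acc (var i)) M

/-- `Q = λy p1 … pn x. x (y p1 … pn x)` -/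
def Q (n : Nat) : Lam := lamN (n + 2) (app (var 0) (appVars (var (n + 1)) (n + 1)))

-- auxiliary development, to be inserted before the theorem

/-! ### Basic lift/subst commutation lemmas -/

theorem lift_lift (t : Lam) : ∀ {e d : Nat}, e ≤ d →
    lift e (lift d t) = lift (d + 1) (lift e t) := by
  induction t with
  | var n =>
    intro e d h
    simp only [lift]
    split_ifs <;> simp only [lift] <;> split_ifs <;>
      first | rfl | (exfalso; omega)
  | app s t ihs iht =>
    intro e d h; simp only [lift, ihs h, iht h]
  | lam t ih =>
    intro e d h; simp only [lift]; rw [ih (by omega)]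

theorem subst_lift_self (t : Lam) : ∀ (k : Nat) (u : Lam),
    subst k u (lift k t) = t := by
  induction t with
  | var n =>
    intro k u
    simp only [lift]
    split_ifs <;> simp only [subst] <;> split_ifs <;>
      first | rfl | (congr 1; omega) | (exfalso; omega)
  | app s t ihs iht => intro k u; simp only [lift, subst, ihs, iht]
  | lam t ih => intro k u; simp only [lift, subst, ih]

theorem lift_subst (t : Lam) : ∀ {k d : Nat} (u : Lam), k ≤ d →
    lift d (subst k u t) = subst k (lift d u) (lift (d + 1) t) := by
  induction t with
  | var n =>
    intro k d u h
    simp only [subst, lift]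
    split_ifs <;> simp only [subst, lift] <;> split_ifs <;>
      first | rfl | (congr 1; omega) | (exfalso; omega)
  | app s t ihs iht => intro k d u h; simp only [subst, lift, ihs _ h, iht _ h]
  | lam t ih =>
    intro k d u h
    simp only [subst, lift]
    rw [ih _ (by omega), lift_lift u (Nat.zero_le d)]

theorem lift_subst_lt (t : Lam) : ∀ {k d : Nat} (u : Lam), d ≤ k →
    lift d (subst k u t) = subst (k + 1) (lift d u) (lift d t) := by
  induction t with
  | var n =>
    intro k d u h
    simp only [subst, lift]
    split_ifs <;> simp only [subst, lift] <;> split_ifs <;>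
      first | rfl | (congr 1; omega) | (exfalso; omega)
  | app s t ihs iht => intro k d u h; simp only [subst, lift, ihs _ h, iht _ h]
  | lam t ih =>
    intro k d u h
    simp only [subst, lift]
    rw [ih _ (by omega), lift_lift u (Nat.zero_le d)]

theorem subst_subst (t : Lam) : ∀ {j k : Nat} (u v : Lam), j ≤ k →
    subst k u (subst j v t) =
      subst j (subst k u v) (subst (k + 1) (lift j u) t) := by
  induction t with
  | var n =>
    intro j k u v h
    simp only [subst]
    split_ifs <;> (try simp only [subst]) <;> (try split_ifs) <;>
      first
        | rfl | (exfalso; omega) | (congr 1 <;> omega)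
        | (rw [subst_lift_self])
  | app s t ihs iht => intro j k u v h; simp only [subst, ihs _ _ h, iht _ _ h]
  | lam t ih =>
    intro j k u v h
    simp only [subst]
    rw [ih _ _ (by omega), ← lift_subst_lt v u (Nat.zero_le k), ← lift_lift u (Nat.zero_le j)]

/-! ### Step is preserved by lift and subst -/

theorem Step.lift {s t : Lam} (h : Step s t) : ∀ d, Step (lift d s) (lift d t) := by
  induction h with
  | beta t u =>
    intro d
    have := Step.beta (Lam.lift (d + 1) t) (Lam.lift d u)
    rwa [← lift_subst t u (Nat.zero_le d)] at this
  | appL t _ ih => intro d; exact Step.appL _ (ih d)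
  | appR s _ ih => intro d; exact Step.appR _ (ih d)
  | lam _ ih => intro d; exact Step.lam (ih (_ + 1))

theorem Step.subst {s t : Lam} (h : Step s t) :
    ∀ (k : Nat) (u : Lam), Step (Lam.subst k u s) (Lam.subst k u t) := by
  induction h with
  | beta t v =>
    intro k u
    have := Step.beta (Lam.subst (k + 1) (Lam.lift 0 u) t) (Lam.subst k u v)
    rwa [← subst_subst t u v (Nat.zero_le k)] at this
  | appL t _ ih => intro k u; exact Step.appL _ (ih k u)
  | appR s _ ih => intro k u; exact Step.appR _ (ih k u)
  | lam _ ih => intro k u; exact Step.lam (ih (k + 1) _)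

/-! ### Conv basics -/

theorem Conv.map {f : Lam → Lam} (hf : ∀ {a b}, Step a b → Step (f a) (f b))
    {s t : Lam} (h : Conv s t) : Conv (f s) (f t) := by
  induction h with
  | rel a b hab => exact Relation.EqvGen.rel _ _ (hf hab)
  | refl a => exact Relation.EqvGen.refl _
  | symm a b _ ih => exact Relation.EqvGen.symm _ _ ih
  | trans a b c _ _ ih1 ih2 => exact Relation.EqvGen.trans _ _ _ ih1 ih2

theorem Conv.lift {s t : Lam} (h : Conv s t) (d : Nat) :
    Conv (lift d s) (lift d t) := Conv.map (fun hab => hab.lift d) h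

theorem Conv.subst {s t : Lam} (h : Conv s t) (k : Nat) (u : Lam) :
    Conv (Lam.subst k u s) (Lam.subst k u t) := Conv.map (fun hab => hab.subst k u) h

theorem Conv.appL {s s' : Lam} (t : Lam) (h : Conv s s') :
    Conv (app s t) (app s' t) := Conv.map (fun hab => Step.appL t hab) h

theorem Conv.appR (s : Lam) {t t' : Lam} (h : Conv t t') :
    Conv (app s t) (app s t') := Conv.map (fun hab => Step.appR s hab) h

theorem Conv.refl' (s : Lam) : Conv s s := Relation.EqvGen.refl s

theorem Conv.trans' {a b c : Lam} (h1 : Conv a b) (h2 : Conv b c) : Conv a c :=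
  Relation.EqvGen.trans _ _ _ h1 h2

theorem Conv.symm' {a b : Lam} (h : Conv a b) : Conv b a :=
  Relation.EqvGen.symm _ _ h

theorem Step.conv {a b : Lam} (h : Step a b) : Conv a b := Relation.EqvGen.rel _ _ h

/-! ### small rewriting helpers -/

theorem subst_app (k : Nat) (u a b : Lam) :
    subst k u (app a b) = app (subst k u a) (subst k u b) := rfl

theorem lift_app (d : Nat) (a b : Lam) :
    lift d (app a b) = app (lift d a) (lift d b) := rfl

theorem subst_var_eq (k : Nat) (u : Lam) : subst k u (var k) = u := by
  simp [subst]

theorem subst_var_lt {n k : Nat} (h : n < k) (u : Lam) :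
    subst k u (var n) = var n := by
  simp only [subst]; rw [if_neg (by omega), if_neg (by omega)]

theorem lift_var_lt {n d : Nat} (h : n < d) : lift d (var n) = var n := by
  simp only [lift]; rw [if_pos h]

/-! ### Iterated lifting -/

/-- `liftN m t` is `lift 0` applied `m` times to `t`. -/
def liftN : Nat → Lam → Lam
  | 0, t => t
  | m + 1, t => liftN m (lift 0 t)

theorem liftN_add (a : Nat) : ∀ (b : Nat) (t : Lam),
    liftN a (liftN b t) = liftN (a + b) t := by
  intro b
  induction b generalizing a with
  | zero => intro t; rfl
  | succ b ih =>
    intro t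
    show liftN a (liftN b (lift 0 t)) = liftN (a + (b+1)) t
    rw [ih, show a + (b+1) = (a+b)+1 from rfl]
    rfl

theorem liftN_lift (m : Nat) : ∀ (d : Nat) (s : Lam),
    lift (d + m) (liftN m s) = liftN m (lift d s) := by
  induction m with
  | zero => intro d s; rfl
  | succ m ih =>
    intro d s
    show lift (d + (m+1)) (liftN m (lift 0 s)) = liftN m (lift 0 (lift d s))
    rw [show d + (m+1) = (d+1) + m by omega, ih, lift_lift s (Nat.zero_le d)]

theorem lift_liftN {k m : Nat} (h : k ≤ m) (t : Lam) :
    lift k (liftN m t) = liftN (m + 1) t := by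
  have h1 : liftN m t = liftN k (liftN (m - k) t) := by
    rw [liftN_add]; congr 1; omega
  rw [h1]
  have := liftN_lift k 0 (liftN (m - k) t)
  rw [Nat.zero_add] at this
  rw [this]
  show liftN k (liftN 1 (liftN (m-k) t)) = _
  rw [liftN_add, liftN_add]
  congr 1; omega

theorem subst_liftN {k m : Nat} (h : k ≤ m) (u t : Lam) :
    subst k u (liftN (m + 1) t) = liftN m t := by
  rw [← lift_liftN h t, subst_lift_self]

theorem liftN_app (m : Nat) : ∀ (a b : Lam),
    liftN m (app a b) = app (liftN m a) (liftN m b) := by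
  induction m with
  | zero => intro a b; rfl
  | succ m ih => intro a b; show liftN m (lift 0 (app a b)) = _; rw [lift]; exact ih _ _

/-! ### lamN and appVars computations -/

theorem subst_lamN (m : Nat) : ∀ (j : Nat) (u t : Lam),
    subst j u (lamN m t) = lamN m (subst (j + m) (liftN m u) t) := by
  induction m with
  | zero => intro j u t; rfl
  | succ m ih =>
    intro j u t
    show lam (subst (j+1) (lift 0 u) (lamN m t)) = lam (lamN m (subst (j + (m+1)) (liftN (m+1) u) t))
    rw [ih, show j + 1 + m = j + (m + 1) by omega]
    rfl

theorem lift_lamN (m : Nat) : ∀ (d : Nat) (t : Lam),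
    lift d (lamN m t) = lamN m (lift (d + m) t) := by
  induction m with
  | zero => intro d t; rfl
  | succ m ih =>
    intro d t
    show lam (lift (d+1) (lamN m t)) = lam (lamN m (lift (d + (m+1)) t))
    rw [ih, show d + 1 + m = d + (m + 1) by omega]

theorem appVars_zero (M : Lam) : appVars M 0 = M := by
  simp [appVars]

theorem appVars_succ (M : Lam) (m : Nat) :
    appVars M (m + 1) = appVars (app M (var m)) m := by
  simp [appVars, List.range_succ]

theorem subst_appVars (m : Nat) : ∀ (k : Nat) (u M : Lam), m ≤ k →
    subst k u (appVars M m) = appVars (subst k u M) m := by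
  induction m with
  | zero => intro k u M _; rw [appVars_zero, appVars_zero]
  | succ m ih =>
    intro k u M h
    rw [appVars_succ, appVars_succ, ih _ _ _ (by omega)]
    congr 1
    show app (subst k u M) (subst k u (var m)) = _
    rw [subst]
    rw [if_neg (by omega), if_neg (by omega)]

theorem lift_appVars (m : Nat) : ∀ (d : Nat) (M : Lam), m ≤ d →
    lift d (appVars M m) = appVars (lift d M) m := by
  induction m with
  | zero => intro d M _; rw [appVars_zero, appVars_zero]
  | succ m ih =>
    intro d M h
    rw [appVars_succ, appVars_succ, ih _ _ (by omega)]
    congr 1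
    show app (lift d M) (lift d (var m)) = _
    rw [lift, if_pos (by omega)]

theorem appVars_one (X : Lam) : appVars X 1 = app X (var 0) := by
  rw [appVars_succ, appVars_zero]

theorem liftN_one (t : Lam) : liftN 1 t = lift 0 t := rfl

/-- Substitution into the body `x (X p⃗)`. -/
theorem subst_body {k m : Nat} (u X : Lam) (h : m ≤ k) (hk : 0 < k) :
    subst k u (app (var 0) (appVars X m)) = app (var 0) (appVars (subst k u X) m) := by
  rw [subst_app, subst_appVars _ _ _ _ h, subst_var_lt hk]

theorem lift_Q (d n : Nat) : lift d (Q n) = Q n := by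
  show lift d (lamN (n+2) (app (var 0) (appVars (var (n+1)) (n+1)))) = _
  rw [lift_lamN, lift_app, lift_var_lt (by omega), lift_appVars _ _ _ (by omega),
    lift_var_lt (by omega)]
  rfl

/-! ### apps -/

/-- `apps M L`: `M` applied to the list `L` of arguments. -/
def apps (M : Lam) (L : List Lam) : Lam := L.foldl app M

theorem apps_nil (M : Lam) : apps M [] = M := rfl

theorem apps_cons (M P : Lam) (L : List Lam) :
    apps M (P :: L) = apps (app M P) L := rfl

theorem apps_append_single (M A : Lam) (L : List Lam) :
    apps M (L ++ [A]) = app (apps M L) A := by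
  simp [apps]

theorem lift_apps (d : Nat) (L : List Lam) : ∀ (M : Lam),
    lift d (apps M L) = apps (lift d M) (L.map (lift d)) := by
  induction L with
  | nil => intro M; rfl
  | cons P L ih =>
    intro M
    rw [apps_cons, List.map_cons, apps_cons, ih, lift]

theorem Conv.apps {M M' : Lam} (h : Conv M M') (L : List Lam) :
    Conv (apps M L) (apps M' L) := by
  induction L generalizing M M' with
  | nil => exact h
  | cons P L ih => exact ih (h.appL P)

/-! ### The key conversion lemmas -/

/-- One parameter can be absorbed: `Q (n+1) M P =β Q n (M P)`. -/
theorem Q_absorb (n : Nat) (M P : Lam) :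
    Conv (app (app (Q (n + 1)) M) P) (app (Q n) (app M P)) := by
  set C : Lam := lamN (n + 1)
    (app (var 0) (appVars (app (liftN (n+1) M) (liftN (n+1) P)) (n+1))) with hC
  have hR : Step (app (Q n) (app M P)) C := by
    have h1 := Step.beta (lamN (n + 1) (app (var 0) (appVars (var (n+1)) (n+1)))) (app M P)
    have e1 : subst 0 (app M P) (lamN (n + 1) (app (var 0) (appVars (var (n+1)) (n+1)))) = C := by
      rw [subst_lamN, Nat.zero_add,
        subst_body _ _ (le_refl (n+1)) (by omega), subst_var_eq, liftN_app, hC]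
    rw [e1] at h1
    exact h1
  have hL : Conv (app (app (Q (n + 1)) M) P) C := by
    have h1 := Step.beta (lamN (n + 2) (app (var 0) (appVars (var (n+2)) (n+2)))) M
    have e1 : subst 0 M (lamN (n + 2) (app (var 0) (appVars (var (n+2)) (n+2))))
        = lamN (n + 2) (app (var 0) (appVars (app (liftN (n+2) M) (var (n+1))) (n+1))) := by
      rw [subst_lamN, Nat.zero_add, appVars_succ,
        subst_body _ _ (by omega) (by omega), subst_app, subst_var_eq,
        subst_var_lt (by omega)]
    rw [e1] at h1
    have h1' : Step (app (app (Q (n+1)) M) P)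
        (app (lamN (n + 2) (app (var 0) (appVars (app (liftN (n+2) M) (var (n+1))) (n+1)))) P) :=
      Step.appL P h1
    have h2 := Step.beta
      (lamN (n + 1) (app (var 0) (appVars (app (liftN (n+2) M) (var (n+1))) (n+1)))) P
    have e2 : subst 0 P
        (lamN (n + 1) (app (var 0) (appVars (app (liftN (n+2) M) (var (n+1))) (n+1)))) = C := by
      rw [subst_lamN, Nat.zero_add,
        subst_body _ _ (le_refl (n+1)) (by omega), subst_app,
        subst_liftN (le_refl (n+1)), subst_var_eq, hC]
    rw [e2] at h2
    exact Conv.trans' h1'.conv h2.conv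
  exact Conv.trans' hL (Conv.symm' hR.conv)

/-- Base case: `Q 0 M A =β A (M A)`. -/
theorem Q_zero (M A : Lam) :
    Conv (app (app (Q 0) M) A) (app A (app M A)) := by
  have h1 := Step.beta (lamN 1 (app (var 0) (appVars (var 1) 1))) M
  have e1 : subst 0 M (lamN 1 (app (var 0) (appVars (var 1) 1)))
      = lamN 1 (app (var 0) (appVars (liftN 1 M) 1)) := by
    rw [subst_lamN, Nat.zero_add, subst_body _ _ (le_refl 1) (by omega), subst_var_eq]
  rw [e1] at h1
  have h1' : Step (app (app (Q 0) M) A)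
      (app (lamN 1 (app (var 0) (appVars (liftN 1 M) 1))) A) := Step.appL A h1
  have h2 := Step.beta (app (var 0) (appVars (liftN 1 M) 1)) A
  have e2 : subst 0 A (app (var 0) (appVars (liftN 1 M) 1)) = app A (app M A) := by
    rw [appVars_one, liftN_one, subst_app, subst_app, subst_var_eq, subst_lift_self]
  rw [e2] at h2
  exact Conv.trans' h1'.conv h2.conv

/-- Main claim: `Q n M P1 … Pn A =β A (M P1 … Pn A)`. -/
theorem Q_main : ∀ (Ps : List Lam) (M A : Lam),
    Conv (apps (app (Q Ps.length) M) (Ps ++ [A])) (app A (apps M (Ps ++ [A]))) := by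
  intro Ps
  induction Ps with
  | nil =>
    intro M A
    simpa [apps] using Q_zero M A
  | cons P Ps ih =>
    intro M A
    show Conv (apps (app (app (Q (Ps.length + 1)) M) P) (Ps ++ [A])) _
    have step1 : Conv (apps (app (app (Q (Ps.length + 1)) M) P) (Ps ++ [A]))
        (apps (app (Q Ps.length) (app M P)) (Ps ++ [A])) :=
      Conv.apps (Q_absorb Ps.length M P) _
    exact Conv.trans' step1 (ih (app M P) A)

/-- Fpc-generating scheme with dummy parameters: if `Y` is an fpc, then
`Y Q P1 … Pn` is an fpc for arbitrary terms `P1,…,Pn`. -/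
theorem dummy_parameters_scheme :
    ∀ (n : Nat) (Y : Lam), isFPC Y →
      ∀ Ps : List Lam, Ps.length = n → isFPC (Ps.foldl app (app Y (Q n))) := by
  intro n Y hY Ps hlen
  subst hlen
  unfold isFPC at hY ⊢
  set Qn := Q Ps.length with hQn
  set Y' := lift 0 Y with hY'
  set Ps' := Ps.map (lift 0) with hPs'
  have hT : lift 0 (Ps.foldl app (app Y Qn)) = apps (app Y' Qn) Ps' := by
    show lift 0 (apps (app Y Qn) Ps) = _
    rw [lift_apps, lift_app, hQn, lift_Q]
  have h1 : Conv (app Y' Qn) (app Qn (app Y' Qn)) := by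
    have h := (hY.lift 1).subst 0 Qn
    have eY : Lam.subst 0 Qn (lift 1 (app (lift 0 Y) (var 0))) = app Y' Qn := by
      rw [lift_app, lift_var_lt (by omega), ← lift_lift Y (le_refl 0),
        subst_app, subst_lift_self, subst_var_eq]
    have eX : Lam.subst 0 Qn (lift 1 (app (var 0) (app (lift 0 Y) (var 0))))
        = app Qn (app Y' Qn) := by
      rw [lift_app, lift_app, lift_var_lt (by omega), ← lift_lift Y (le_refl 0),
        subst_app, subst_app, subst_lift_self, subst_var_eq]
    rw [eY, eX] at h
    exact h
  have h2 : Conv (apps (app Y' Qn) (Ps' ++ [var 0]))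
      (apps (app Qn (app Y' Qn)) (Ps' ++ [var 0])) := Conv.apps h1 _
  have hlen' : Ps'.length = Ps.length := by simp [hPs']
  have h3 : Conv (apps (app Qn (app Y' Qn)) (Ps' ++ [var 0]))
      (app (var 0) (apps (app Y' Qn) (Ps' ++ [var 0]))) := by
    have := Q_main Ps' (app Y' Qn) (var 0)
    rwa [hlen'] at this
  have main := Conv.trans' h2 h3
  rw [apps_append_single] at main
  rwa [hT]


end Lam
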